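/- For λ = 0.99, the unique critical parameter μ_h > 1 satisfying b(0.99, μ_h) = 1 lies in the open interval (4.5, 4.55) (equivalently, b(0.99, 4.5) < 1 < b(0.99, 4.55)); moreover, at μ = μ_h one has a(0.99, μ_h)² < 4, so that the Jacobian of Φ_{0.99,μ_h} at its interior fixed point p* has a pair of non-real complex conjugate eigenvalues of modulus exactly 1. -/

import Mathlib

noncomputable section

/-- The planar R-S flip-flop model map `Φ_{λ,μ}(x,y) = (1 − x(λ(1−x) + y), μy(x − y))`. -/
def Phi (l m : ℝ) (p : ℝ × ℝ) : ℝ × ℝ :=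
  (1 - p.1 * (l * (1 - p.1) + p.2), m * p.2 * (p.1 - p.2))

/-- `x*` coordinate of the interior fixed point. -/
def xstar (l m : ℝ) : ℝ :=
  ((m⁻¹ - l - 1) + Real.sqrt ((1 + l - m⁻¹) ^ 2 + 4 * (1 - l))) / (2 * (1 - l))

/-- `y*` coordinate of the interior fixed point. -/
def ystar (l m : ℝ) : ℝ := xstar l m - 1 / m

/-- `a(λ,μ)`, the trace of the Jacobian of Φ at p*. -/
def adef (l m : ℝ) : ℝ := (2 * l - m - 1) * xstar l m + (2 - l + m⁻¹)

/-- `b(λ,μ)`, the determinant of the Jacobian of Φ at p*. -/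
def bdef (l m : ℝ) : ℝ :=
  m * ((l * (4 * m⁻¹ - 1) - 2 * (1 + m⁻¹)) * xstar l m + 2 * (1 - m⁻¹ * (l - m⁻¹)))

/-- The Jacobian matrix of Φ_{λ,μ} at the interior fixed point p*. -/
def Jp (l m : ℝ) : Matrix (Fin 2) (Fin 2) ℝ :=
  !![l * (2 * xstar l m - 1) - ystar l m, -(xstar l m);
     m * ystar l m, m * (xstar l m - 2 * ystar l m)]

/-! The sign change of `b(0.99, ·)` between `4.5` and `4.55`, checked through rational enclosures
of the square root in `x*`, gives `μ_h` by the intermediate value theorem. For uniqueness, writing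
`t = 1/μ`, the equation `b(0.99, μ) = 1` forces a quartic in `t` to vanish, and that quartic is
negative on `[1/4, 1]` and strictly decreasing on `(0, 1/4)`. The fixed-point equation
`(1 - λ) x*² + (1 + λ - 1/μ) x* = 1` identifies `a` and `b` with the trace and determinant of the
Jacobian, so at `μ_h` its characteristic polynomial is `σ² - aσ + 1`, whose roots
`(a ± i√(4 - a²))/2` lie on the unit circle when `a² < 4`. -/

section FixedPoint

variable {l m : ℝ}

theorem xstar_quadratic (hl : l < 1) :
    (1 - l) * xstar l m ^ 2 + (1 + l - m⁻¹) * xstar l m - 1 = 0 := by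
  have hl' : 1 - l ≠ 0 := by linarith
  set s := Real.sqrt ((1 + l - m⁻¹) ^ 2 + 4 * (1 - l))
  have hs : s ^ 2 = (1 + l - m⁻¹) ^ 2 + 4 * (1 - l) :=
    Real.sq_sqrt (by nlinarith [sq_nonneg (1 + l - m⁻¹)])
  have hx : 2 * (1 - l) * xstar l m = m⁻¹ - l - 1 + s := by
    rw [xstar]; exact mul_div_cancel₀ _ (mul_ne_zero two_ne_zero hl')
  have h4 : 4 * (1 - l) * ((1 - l) * xstar l m ^ 2 + (1 + l - m⁻¹) * xstar l m - 1) = 0 := by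
    linear_combination (2 * (1 - l) * xstar l m + (1 + l - m⁻¹) + s) * hx + hs
  simpa [hl'] using h4

theorem trace_Jp (hm : m ≠ 0) : (Jp l m).trace = adef l m := by
  rw [Matrix.trace_fin_two, Jp, adef, ystar]
  simp only [Matrix.of_apply, Matrix.cons_val', Matrix.cons_val_zero, Matrix.cons_val_one,
    Matrix.empty_val', Matrix.cons_val_fin_one]
  field_simp
  ring

theorem det_Jp (hl : l < 1) : (Jp l m).det = bdef l m := by
  rw [Matrix.det_fin_two, Jp, bdef, ystar]
  simp only [Matrix.of_apply, Matrix.cons_val', Matrix.cons_val_zero, Matrix.cons_val_one,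
    Matrix.empty_val', Matrix.cons_val_fin_one]
  linear_combination 2 * m * xstar_quadratic (m := m) hl

theorem continuousOn_bdef (hl : l ≠ 1) : ContinuousOn (bdef l) (Set.Ioi 0) := by
  have hl' : 2 * (1 - l) ≠ 0 := by intro h; apply hl; linarith
  unfold bdef xstar
  fun_prop (disch := intro x hx; first | exact hl' | exact ne_of_gt hx)

end FixedPoint

theorem det_smul_one_sub_map_ofReal (A : Matrix (Fin 2) (Fin 2) ℝ) (σ : ℂ) :
    (σ • (1 : Matrix (Fin 2) (Fin 2) ℂ) - A.map Complex.ofReal).det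
      = σ ^ 2 - A.trace * σ + A.det := by
  simp only [Matrix.det_fin_two, Matrix.trace_fin_two, Matrix.sub_apply, Matrix.smul_apply,
    Matrix.one_apply, Matrix.map_apply]
  push_cast
  simp only [smul_eq_mul, mul_one, mul_zero, Fin.isValue, zero_sub, mul_neg, neg_mul, neg_neg]
  ring

section UnitCircleRoots

open Complex

variable {a : ℝ}

theorem im_add_I_mul_sqrt_div_two_ne_zero (ha : a ^ 2 < 4) :
    (((a : ℂ) + I * √(4 - a ^ 2)) / 2).im ≠ 0 := by
  have : 0 < √(4 - a ^ 2) := Real.sqrt_pos.2 (by linarith)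
  simp only [div_ofNat_im, add_im, ofReal_im, mul_im, I_re, ofReal_re, I_im, zero_mul, one_mul]
  positivity

theorem norm_add_I_mul_sqrt_div_two (ha : a ^ 2 ≤ 4) :
    ‖((a : ℂ) + I * √(4 - a ^ 2)) / 2‖ = 1 := by
  have hs : √(4 - a ^ 2) ^ 2 = 4 - a ^ 2 := Real.sq_sqrt (by linarith)
  rw [norm_def, Real.sqrt_eq_one, normSq_apply]
  simp only [div_ofNat_re, add_re, ofReal_re, mul_re, I_re, zero_mul, I_im, ofReal_im, mul_zero,
    sub_self, add_zero, div_ofNat_im, add_im, mul_im, one_mul, zero_add]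
  linear_combination hs / 4

theorem sq_sub_mul_add_one_eq_zero (ha : a ^ 2 ≤ 4) {σ : ℂ}
    (hσ : σ = ((a : ℂ) + I * √(4 - a ^ 2)) / 2 ∨ σ = ((a : ℂ) - I * √(4 - a ^ 2)) / 2) :
    σ ^ 2 - a * σ + 1 = 0 := by
  have hs : ((√(4 - a ^ 2) : ℝ) : ℂ) ^ 2 = 4 - (a : ℂ) ^ 2 := by
    exact_mod_cast Real.sq_sqrt (by linarith)
  rcases hσ with rfl | rfl <;>
    linear_combination (-1 / 4 : ℂ) * hs + (√(4 - a ^ 2) ^ 2 / 4 : ℂ) * I_sq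

end UnitCircleRoots

/-- `b(0.99, 1/t) = 1` reads `(1.96 t - 2.99) √((1.99 - t)² + 0.04) = -2t² + 6.95t - 5.9901`;
squaring gives this quartic. -/
def hopfQuartic (t : ℝ) : ℝ :=
  99/625*t^4 - 12338/15625*t^3 + 8170199/6250000*t^2 - 9955249/12500000*t + 30001/250000

theorem hopfQuartic_inv_eq_zero {m : ℝ} (hm : m ≠ 0) (hb : bdef 0.99 m = 1) :
    hopfQuartic m⁻¹ = 0 := by
  set t := m⁻¹
  set s := Real.sqrt ((1 + 0.99 - t) ^ 2 + 4 * (1 - 0.99))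
  have hs : s ^ 2 = (1 + 0.99 - t) ^ 2 + 4 * (1 - 0.99) := Real.sq_sqrt (by positivity)
  have hmt : m * t = 1 := mul_inv_cancel₀ hm
  rw [bdef, xstar] at hb
  have hroot : (1.96 * t - 2.99) * s = -2 * t ^ 2 + 6.95 * t - 5.9901 := by
    linear_combination (2 * (1 - 0.99)) * (t * hb - ((0.99 * (4 * t - 1) - 2 * (1 + t)) *
      ((t - 0.99 - 1 + s) / (2 * (1 - 0.99))) + 2 * (1 - t * (0.99 - t))) * hmt)
  rw [hopfQuartic]
  linear_combination (-((1.96 * t - 2.99) * s + (-2 * t ^ 2 + 6.95 * t - 5.9901))) * hroot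
    + (1.96 * t - 2.99) ^ 2 * hs

theorem hopfQuartic_neg {t : ℝ} (h1 : 1/4 ≤ t) (h2 : t ≤ 1) : hopfQuartic t < 0 := by
  have h12 := mul_nonneg (sub_nonneg.2 h1) (sub_nonneg.2 h2)
  rw [hopfQuartic]
  nlinarith [sq_nonneg (t - 1/2), sq_nonneg (t - 1/4), sq_nonneg (t - 1),
    sq_nonneg ((t - 1/4) * (t - 1)), mul_nonneg h12 (sub_nonneg.2 h1),
    mul_nonneg h12 (sub_nonneg.2 h2)]

theorem strictAntiOn_hopfQuartic : StrictAntiOn hopfQuartic (Set.Ioo 0 (1/4)) := by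
  rintro t₁ ⟨h₁0, h₁⟩ t₂ ⟨h₂0, h₂⟩ h12
  have hslope : 99/625*(t₁^3 + t₁^2*t₂ + t₁*t₂^2 + t₂^3)
      - 12338/15625*(t₁^2 + t₁*t₂ + t₂^2) + 8170199/6250000*(t₁ + t₂)
      - 9955249/12500000 < 0 := by
    nlinarith [mul_pos h₁0 h₂0, sq_nonneg (t₁ + t₂), pow_pos h₁0 3, pow_pos h₂0 3]
  have hdiff : hopfQuartic t₂ - hopfQuartic t₁ = (t₂ - t₁) * (99/625*(t₁^3 + t₁^2*t₂ + t₁*t₂^2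
      + t₂^3) - 12338/15625*(t₁^2 + t₁*t₂ + t₂^2) + 8170199/6250000*(t₁ + t₂)
      - 9955249/12500000) := by
    rw [hopfQuartic, hopfQuartic]; ring
  nlinarith

theorem inv_mem_Ioo_of_bdef_eq_one {m : ℝ} (hm : 1 < m) (hb : bdef 0.99 m = 1) :
    m⁻¹ ∈ Set.Ioo 0 (1/4) := by
  have hP := hopfQuartic_inv_eq_zero (by positivity) hb
  refine ⟨by positivity, lt_of_not_ge fun h => ?_⟩
  exact (hopfQuartic_neg h (inv_le_one_of_one_le₀ hm.le)).ne hP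

theorem eq_of_bdef_eq_one {m m' : ℝ} (hm : 1 < m) (hm' : 1 < m') (hb : bdef 0.99 m = 1)
    (hb' : bdef 0.99 m' = 1) : m = m' :=
  inv_injective <| strictAntiOn_hopfQuartic.injOn (inv_mem_Ioo_of_bdef_eq_one hm hb)
    (inv_mem_Ioo_of_bdef_eq_one hm' hb')
    ((hopfQuartic_inv_eq_zero (by positivity) hb).trans
      (hopfQuartic_inv_eq_zero (by positivity) hb').symm)

theorem bdef_lt_one_at_four_point_five : bdef 0.99 4.5 < 1 := by
  have hinv : ((4.5 : ℝ))⁻¹ = 2/9 := by norm_num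
  rw [bdef, xstar, hinv]
  set s := Real.sqrt ((1 + 0.99 - 2/9) ^ 2 + 4 * (1 - 0.99))
  have hs : s ^ 2 = 2563681/810000 := by rw [Real.sq_sqrt (by norm_num)]; norm_num
  have hs0 : 0 ≤ s := Real.sqrt_nonneg _
  have hs_lo : 1.77903 < s := by nlinarith
  norm_num
  linarith

theorem one_lt_bdef_at_four_point_five_five : 1 < bdef 0.99 4.55 := by
  have hinv : ((4.55 : ℝ))⁻¹ = 20/91 := by norm_num
  rw [bdef, xstar, hinv]
  set s := Real.sqrt ((1 + 0.99 - 20/91) ^ 2 + 4 * (1 - 0.99))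
  have hs : s ^ 2 = 262812281/82810000 := by rw [Real.sq_sqrt (by norm_num)]; norm_num
  have hs0 : 0 ≤ s := Real.sqrt_nonneg _
  have hs_hi : s < 1.781484 := by nlinarith
  norm_num
  linarith

theorem sq_adef_lt_four {m : ℝ} (h1 : 4.5 < m) (h2 : m < 4.55) : adef 0.99 m ^ 2 < 4 := by
  have hmt : m * m⁻¹ = 1 := mul_inv_cancel₀ (by positivity)
  have ht1 : m⁻¹ < 2/9 := by nlinarith
  have ht2 : 20/91 < m⁻¹ := by nlinarith
  rw [adef, xstar]
  set t := m⁻¹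
  set s := Real.sqrt ((1 + 0.99 - t) ^ 2 + 4 * (1 - 0.99))
  have hs0 : 0 ≤ s := Real.sqrt_nonneg _
  have hs : s ^ 2 = (1 + 0.99 - t) ^ 2 + 4 * (1 - 0.99) := Real.sq_sqrt (by positivity)
  have hs_lo : 1.779 < s := by nlinarith
  have hs_hi : s < 1.782 := by nlinarith
  set x := (t - 0.99 - 1 + s) / (2 * (1 - 0.99)) with hxdef
  have hx_lo : 0.438 < x := by rw [hxdef, lt_div_iff₀ (by norm_num)]; linarith
  have hx_hi : x < 0.712 := by rw [hxdef, div_lt_iff₀ (by norm_num)]; linarith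
  have ha_hi : (2 * 0.99 - m - 1) * x + (2 - 0.99 + t) < 0 := by nlinarith
  have ha_lo : -2 < (2 * 0.99 - m - 1) * x + (2 - 0.99 + t) := by nlinarith
  nlinarith

/-- For λ = 0.99: the unique μ_h > 1 with b(0.99,μ_h) = 1 lies in (4.5, 4.55)
(equivalently b(0.99,4.5) < 1 < b(0.99,4.55)); moreover a(0.99,μ_h)² < 4, so the
Jacobian at p* has a pair of non-real complex conjugate eigenvalues of modulus 1. -/
theorem stmt_16 :
    ∃ μh : ℝ, 1 < μh ∧ bdef 0.99 μh = 1 ∧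
      (∀ μ' : ℝ, 1 < μ' → bdef 0.99 μ' = 1 → μ' = μh) ∧
      4.5 < μh ∧ μh < 4.55 ∧
      bdef 0.99 4.5 < 1 ∧ 1 < bdef 0.99 4.55 ∧
      (adef 0.99 μh) ^ 2 < 4 ∧
      (((adef 0.99 μh : ℂ) + Complex.I * Real.sqrt (4 - (adef 0.99 μh) ^ 2)) / 2).im
        ≠ 0 ∧
      norm
          (((adef 0.99 μh : ℂ) + Complex.I * Real.sqrt (4 - (adef 0.99 μh) ^ 2)) / 2)
        = 1 ∧
      (∀ σ : ℂ,
        (σ = ((adef 0.99 μh : ℂ) + Complex.I * Real.sqrt (4 - (adef 0.99 μh) ^ 2)) / 2 ∨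
          σ = ((adef 0.99 μh : ℂ) - Complex.I * Real.sqrt (4 - (adef 0.99 μh) ^ 2)) / 2)
        → Matrix.det (σ • (1 : Matrix (Fin 2) (Fin 2) ℂ)
            - (Jp 0.99 μh).map (Complex.ofReal)) = 0) := by
  obtain ⟨μh, ⟨h45, h455⟩, hb⟩ := intermediate_value_Ioo (by norm_num : (4.5 : ℝ) ≤ 4.55)
    ((continuousOn_bdef (by norm_num)).mono fun m hm => lt_of_lt_of_le (by norm_num) hm.1)
    ⟨bdef_lt_one_at_four_point_five, one_lt_bdef_at_four_point_five_five⟩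
  have hμ : 1 < μh := by linarith
  have ha := sq_adef_lt_four h45 h455
  refine ⟨μh, hμ, hb, fun μ' hμ' hb' => eq_of_bdef_eq_one hμ' hμ hb' hb, h45, h455,
    bdef_lt_one_at_four_point_five, one_lt_bdef_at_four_point_five_five, ha,
    im_add_I_mul_sqrt_div_two_ne_zero ha, norm_add_I_mul_sqrt_div_two ha.le, fun σ hσ => ?_⟩
  rw [det_smul_one_sub_map_ofReal, trace_Jp (by positivity), det_Jp (by norm_num), hb]
  simpa using sq_sub_mul_add_one_eq_zero ha.le hσ
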